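/- For every real γ with 0 < γ < √2, the integral ∫₁^∞ x^(γ²/4 − 1) (x+1)^(−γ²/2) dx converges and equals cos(πγ²/4) · Γ(γ²/4) · Γ(1−γ²/2) / Γ(1−γ²/4). -/

import Mathlib

/-!
With `a = γ²/4` the integrand is `x^(a-1) (x+1)^(-2a)`. The substitution `t = x/(x+1)`, with
`dt = (x+1)⁻² dx`, maps `(1, ∞)` onto `(1/2, 1)` and turns it into the Beta integrand
`t^(a-1) (1-t)^(a-1)`, which is symmetric about `1/2`; so the integral is `B(a, a)/2 =
Γ(a)²/(2Γ(2a))`. Euler's reflection formula at `a` and at `2a`, together with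
`sin 2πa = 2 sin πa cos πa`, rewrites this as `cos(πa) Γ(a) Γ(1-2a) / Γ(1-a)`.
-/

open Real MeasureTheory Set

namespace Real

theorem Gamma_mul_Gamma_div_two_mul_Gamma_two_mul {a : ℝ} (ha : sin (π * (2 * a)) ≠ 0) :
    Gamma a * Gamma a / (2 * Gamma (2 * a)) =
      cos (π * a) * Gamma a * Gamma (1 - 2 * a) / Gamma (1 - a) := by
  have hdouble : sin (π * (2 * a)) = 2 * sin (π * a) * cos (π * a) := by
    rw [mul_left_comm, sin_two_mul]
  have hsin : sin (π * a) ≠ 0 := fun h => ha (by rw [hdouble, h]; ring)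
  have hreflect := Gamma_mul_Gamma_one_sub a
  have hreflect_two := Gamma_mul_Gamma_one_sub (2 * a)
  have hΓ2a : Gamma (2 * a) ≠ 0 := fun h => by
    rw [h, zero_mul] at hreflect_two
    exact div_ne_zero pi_ne_zero ha hreflect_two.symm
  have hΓ1a : Gamma (1 - a) ≠ 0 := fun h => by
    rw [h, mul_zero] at hreflect
    exact div_ne_zero pi_ne_zero hsin hreflect.symm
  rw [eq_div_iff hsin] at hreflect
  rw [hdouble, eq_div_iff (hdouble ▸ ha)] at hreflect_two
  rw [div_eq_div_iff (mul_ne_zero two_ne_zero hΓ2a) hΓ1a]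
  apply mul_right_cancel₀ hsin
  linear_combination Gamma a * hreflect - Gamma a * hreflect_two

theorem Gamma_mul_Gamma_eq_Gamma_add_mul_integral {a b : ℝ} (ha : 0 < a) (hb : 0 < b) :
    Gamma a * Gamma b = Gamma (a + b) * ∫ x in (0 : ℝ)..1, x ^ (a - 1) * (1 - x) ^ (b - 1) := by
  have h := Complex.Gamma_mul_Gamma_eq_betaIntegral (s := a) (t := b)
    (by simpa using ha) (by simpa using hb)
  have hbeta : Complex.betaIntegral a b =
      ((∫ x in (0 : ℝ)..1, x ^ (a - 1) * (1 - x) ^ (b - 1) : ℝ) : ℂ) := by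
    rw [Complex.betaIntegral, ← intervalIntegral.integral_ofReal]
    refine intervalIntegral.integral_congr fun x hx => ?_
    rw [uIcc_of_le zero_le_one] at hx
    push_cast
    rw [Complex.ofReal_cpow hx.1, Complex.ofReal_cpow (sub_nonneg.2 hx.2)]
    push_cast
    rfl
  rw [hbeta, ← Complex.ofReal_add, Complex.Gamma_ofReal, Complex.Gamma_ofReal,
    Complex.Gamma_ofReal] at h
  exact_mod_cast h

end Real

theorem intervalIntegral.integral_eq_two_mul_integral_of_symm {f : ℝ → ℝ} {a b : ℝ}
    (hsymm : ∀ x, f (a + b - x) = f x) (hf : IntervalIntegrable f volume ((a + b) / 2) b) :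
    ∫ x in a..b, f x = 2 * ∫ x in (a + b) / 2..b, f x := by
  have hmid : a + b - (a + b) / 2 = (a + b) / 2 := by ring
  have hreflect : ∫ x in a..(a + b) / 2, f x = ∫ x in (a + b) / 2..b, f x := by
    simpa only [hsymm, hmid, add_sub_cancel_left] using
      intervalIntegral.integral_comp_sub_left (a := a) (b := (a + b) / 2) f (a + b)
  have hf' : IntervalIntegrable f volume a ((a + b) / 2) := by
    simpa only [hsymm, hmid, add_sub_cancel_right] using (hf.comp_sub_left (a + b)).symm
  rw [← intervalIntegral.integral_add_adjacent_intervals hf' hf, hreflect, two_mul]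

theorem intervalIntegrable_rpow_mul_one_sub_rpow (a : ℝ) {b : ℝ} (hb : 0 < b) :
    IntervalIntegrable (fun x : ℝ => x ^ (a - 1) * (1 - x) ^ (b - 1)) volume (1 / 2) 1 := by
  have hright : IntervalIntegrable (fun x : ℝ => (1 - x) ^ (b - 1)) volume (1 / 2) 1 := by
    have := (intervalIntegral.intervalIntegrable_rpow' (r := b - 1) (by linarith)
      (a := 0) (b := 1 / 2)).comp_sub_left 1
    norm_num at this
    exact this.symm
  refine hright.continuousOn_mul (ContinuousOn.rpow_const continuousOn_id fun x hx => ?_)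
  rw [uIcc_of_le (by norm_num)] at hx
  exact Or.inl (by linarith [hx.1])

theorem hasDerivAt_div_add_one {x : ℝ} (hx : x + 1 ≠ 0) :
    HasDerivAt (fun y : ℝ => y / (y + 1)) ((x + 1) ^ 2)⁻¹ x := by
  refine ((hasDerivAt_id' x).div ((hasDerivAt_id' x).add_const 1) hx).congr_deriv ?_
  field_simp
  ring

theorem injOn_div_add_one : InjOn (fun x : ℝ => x / (x + 1)) (Ioi (-1)) := by
  intro x hx y hy h
  rw [mem_Ioi] at hx hy
  rw [div_eq_div_iff (by linarith) (by linarith)] at h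
  linarith

theorem image_div_add_one_Ioi_one : (fun x : ℝ => x / (x + 1)) '' Ioi 1 = Ioo (1 / 2) 1 := by
  ext t
  constructor
  · rintro ⟨x, hx, rfl⟩
    rw [mem_Ioi] at hx
    constructor
    · rw [div_lt_div_iff₀ (by norm_num) (by linarith)]; linarith
    · rw [div_lt_one (by linarith)]; linarith
  · rintro ⟨ht₁, ht₂⟩
    have h1t : 1 - t ≠ 0 := by linarith
    refine ⟨t / (1 - t), ?_, ?_⟩
    · rw [mem_Ioi, lt_div_iff₀ (by linarith)]; linarith
    · field_simp
      ring

theorem inv_add_one_sq_mul_rpow_div_add_one {x : ℝ} (hx : 0 < x) (a b : ℝ) :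
    ((x + 1) ^ 2)⁻¹ * ((x / (x + 1)) ^ (a - 1) * (1 - x / (x + 1)) ^ (b - 1)) =
      x ^ (a - 1) * (x + 1) ^ (-(a + b)) := by
  have hx1 : 0 < x + 1 := by linarith
  have hsub : 1 - x / (x + 1) = (x + 1)⁻¹ := by field_simp; ring
  have hpow : (x + 1) ^ (-(a + b)) =
      ((x + 1) ^ 2)⁻¹ * ((x + 1) ^ (a - 1))⁻¹ * ((x + 1) ^ (b - 1))⁻¹ := by
    rw [← rpow_natCast, ← rpow_neg hx1.le, ← rpow_neg hx1.le, ← rpow_neg hx1.le,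
      ← rpow_add hx1, ← rpow_add hx1]
    congr 1
    push_cast
    ring
  rw [hsub, div_rpow hx.le hx1.le, inv_rpow hx1.le, hpow]
  ring

section BetaSubstitution

variable (a b : ℝ)

theorem hasDerivWithinAt_div_add_one_Ioi_one :
    ∀ x ∈ Ioi (1 : ℝ),
      HasDerivWithinAt (fun y : ℝ => y / (y + 1)) ((x + 1) ^ 2)⁻¹ (Ioi 1) x :=
  fun x hx => (hasDerivAt_div_add_one (by rw [mem_Ioi] at hx; linarith)).hasDerivWithinAt

theorem abs_inv_add_one_sq_smul_rpow_div_add_one :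
    EqOn (fun x : ℝ =>
        |((x + 1) ^ 2)⁻¹| • ((x / (x + 1)) ^ (a - 1) * (1 - x / (x + 1)) ^ (b - 1)))
      (fun x => x ^ (a - 1) * (x + 1) ^ (-(a + b))) (Ioi 1) := fun x hx => by
  rw [mem_Ioi] at hx
  dsimp only
  rw [abs_of_pos (by positivity), smul_eq_mul, inv_add_one_sq_mul_rpow_div_add_one (by linarith)]

theorem integrableOn_Ioi_one_rpow_mul_add_one_rpow_iff :
    IntegrableOn (fun x : ℝ => x ^ (a - 1) * (x + 1) ^ (-(a + b))) (Ioi 1) ↔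
      IntegrableOn (fun t : ℝ => t ^ (a - 1) * (1 - t) ^ (b - 1)) (Ioo (1 / 2) 1) := by
  rw [← image_div_add_one_Ioi_one, integrableOn_image_iff_integrableOn_abs_deriv_smul
    measurableSet_Ioi hasDerivWithinAt_div_add_one_Ioi_one (injOn_div_add_one.mono
      (Ioi_subset_Ioi (by norm_num)))]
  exact integrableOn_congr_fun (abs_inv_add_one_sq_smul_rpow_div_add_one a b).symm
    measurableSet_Ioi

theorem integral_Ioi_one_rpow_mul_add_one_rpow :
    ∫ x in Ioi (1 : ℝ), x ^ (a - 1) * (x + 1) ^ (-(a + b)) =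
      ∫ t in Ioo (1 / 2 : ℝ) 1, t ^ (a - 1) * (1 - t) ^ (b - 1) := by
  rw [← image_div_add_one_Ioi_one, integral_image_eq_integral_abs_deriv_smul
    measurableSet_Ioi hasDerivWithinAt_div_add_one_Ioi_one (injOn_div_add_one.mono
      (Ioi_subset_Ioi (by norm_num)))]
  exact setIntegral_congr_fun measurableSet_Ioi (abs_inv_add_one_sq_smul_rpow_div_add_one a b).symm

end BetaSubstitution

theorem integrableOn_Ioi_one_rpow_mul_add_one_rpow_two_mul {a : ℝ} (ha : 0 < a) :
    IntegrableOn (fun x : ℝ => x ^ (a - 1) * (x + 1) ^ (-(2 * a))) (Ioi 1) := by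
  rw [two_mul, integrableOn_Ioi_one_rpow_mul_add_one_rpow_iff]
  exact (intervalIntegrable_rpow_mul_one_sub_rpow a ha).1.mono_set Ioo_subset_Ioc_self

theorem integral_Ioi_one_rpow_mul_add_one_rpow_two_mul {a : ℝ} (ha : 0 < a) :
    ∫ x in Ioi (1 : ℝ), x ^ (a - 1) * (x + 1) ^ (-(2 * a)) =
      Gamma a * Gamma a / (2 * Gamma (2 * a)) := by
  have hhalf := intervalIntegral.integral_eq_two_mul_integral_of_symm (a := 0) (b := 1)
    (f := fun x : ℝ => x ^ (a - 1) * (1 - x) ^ (a - 1)) (fun x => by ring_nf)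
    (by simpa using intervalIntegrable_rpow_mul_one_sub_rpow a ha)
  rw [two_mul, integral_Ioi_one_rpow_mul_add_one_rpow, ← integral_Ioc_eq_integral_Ioo,
    ← intervalIntegral.integral_of_le (by norm_num),
    Gamma_mul_Gamma_eq_Gamma_add_mul_integral ha ha, hhalf, zero_add, ← two_mul]
  field_simp

theorem stmt5 (γ : ℝ) (h0 : 0 < γ) (h2 : γ < Real.sqrt 2) :
    IntegrableOn (fun x : ℝ => x ^ (γ ^ 2 / 4 - 1) * (x + 1) ^ (-(γ ^ 2 / 2))) (Ioi 1) volume ∧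
    ∫ x in Ioi (1 : ℝ), x ^ (γ ^ 2 / 4 - 1) * (x + 1) ^ (-(γ ^ 2 / 2)) =
      Real.cos (π * γ ^ 2 / 4) * Gamma (γ ^ 2 / 4) * Gamma (1 - γ ^ 2 / 2) /
        Gamma (1 - γ ^ 2 / 4) := by
  have hγ : γ ^ 2 < 2 := by
    simpa using (sq_lt_sq₀ h0.le (sqrt_nonneg 2)).2 h2
  set a := γ ^ 2 / 4 with ha_def
  have ha : 0 < a := by positivity
  have h2a : 2 * a < 1 := by rw [ha_def]; linarith
  have hsin : sin (π * (2 * a)) ≠ 0 :=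
    (sin_pos_of_pos_of_lt_pi (by positivity) (mul_lt_of_lt_one_right pi_pos h2a)).ne'
  rw [show γ ^ 2 / 2 = 2 * a by ring, show π * γ ^ 2 / 4 = π * a by ring]
  exact ⟨integrableOn_Ioi_one_rpow_mul_add_one_rpow_two_mul ha, by
    rw [integral_Ioi_one_rpow_mul_add_one_rpow_two_mul ha,
      Gamma_mul_Gamma_div_two_mul_Gamma_two_mul hsin]⟩
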